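/- arXiv:2410.05001 — 5 statements merged into one kernel-verified Lean document; each statement's English description precedes it below -/
import Mathlib

section
/- Let H be a directed graph with h vertices such that every vertex of H lying in a source component of H has at least one outgoing edge in H. Let d ≥ 1 be an integer, ε ∈ (0,1), and let G be a directed graph on N vertices in which every vertex has out-degree at most d. If G is ε-far from being H-free, then G contains at least εN/h pairwise source-disjoint subgraphs isomorphic to H. -/
/-!
Take a maximal family `F` of pairwise source-disjoint copies of `H` in `G` and delete every edge
leaving the set `D` of vertices covered by their source components. By maximality, every copy of
`H` has a source vertex `g u ∈ D`, and `u` has an out-edge in `H` which is now missing, so the new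
graph is `H`-free. At most `d · |D| ≤ d h |F|` edges were deleted, so `ε d N ≤ d h |F|`.
-/

open Finset

/-- Reachability inside a vertex subset `S` along edges of `E`. -/
def ReachIn {V : Type*} (E : Finset (V × V)) (S : Finset V) : V → V → Prop :=
  Relation.ReflTransGen (fun a b => a ∈ S ∧ b ∈ S ∧ (a, b) ∈ E)

/-- `S` is a source component of the digraph with edge set `E`: it is nonempty, the induced
subgraph is strongly connected, and no edge enters `S` from outside. -/
def IsSourceComponent {V : Type*} (E : Finset (V × V)) (S : Finset V) : Prop :=
  S.Nonempty ∧ (∀ u ∈ S, ∀ v ∈ S, ReachIn E S u v) ∧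
    ∀ u v, u ∉ S → v ∈ S → (u, v) ∉ E

open Classical in
/-- The union of all source components of the digraph on `Fin h` with edge set `E`. -/
noncomputable def sourceUnion {h : ℕ} (E : Finset (Fin h × Fin h)) : Finset (Fin h) :=
  Finset.univ.filter (fun v => ∃ S : Finset (Fin h), IsSourceComponent E S ∧ v ∈ S)

/-- `f` realizes a copy of the digraph `(Fin h, EH)` as a subgraph of `(Fin N, EG)`. -/
def IsCopy {h N : ℕ} (EH : Finset (Fin h × Fin h)) (EG : Finset (Fin N × Fin N))
    (f : Fin h → Fin N) : Prop :=
  Function.Injective f ∧ ∀ a b : Fin h, (a, b) ∈ EH → (f a, f b) ∈ EG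

lemma ReachIn.of_reflTransGen_of_closed {V : Type*} {E : Finset (V × V)} {S : Finset V}
    (hclosed : ∀ a b, (a, b) ∈ E → b ∈ S → a ∈ S) {u w : V} (hw : w ∈ S)
    (hr : Relation.ReflTransGen (fun a b => (a, b) ∈ E) u w) :
    u ∈ S ∧ ReachIn E S u w := by
  induction hr using Relation.ReflTransGen.head_induction_on with
  | refl => exact ⟨hw, .refl⟩
  | head hab _ ih => exact ⟨hclosed _ _ hab ih.1, .head ⟨hclosed _ _ hab ih.1, ih.1, hab⟩ ih.2⟩

/-- The set of vertices reaching `v` is a source component as soon as it has minimal size. -/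
lemma exists_isSourceComponent {V : Type*} [Fintype V] [Nonempty V]
    (E : Finset (V × V)) : ∃ S : Finset V, IsSourceComponent E S := by
  classical
  let Reach := Relation.ReflTransGen (fun a b : V => (a, b) ∈ E)
  let R : V → Finset V := fun v => univ.filter (Reach · v)
  have mem_R {u v : V} : u ∈ R v ↔ Reach u v := by simp [R]
  obtain ⟨v, -, hmin⟩ := exists_min_image univ (fun v => #(R v)) univ_nonempty
  have hclosed : ∀ a b, (a, b) ∈ E → b ∈ R v → a ∈ R v :=
    fun a b hab hb => mem_R.2 (.head hab (mem_R.1 hb))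
  refine ⟨R v, ⟨v, mem_R.2 .refl⟩, fun u hu w hw => ?_, fun u w hu hw hE => hu (hclosed u w hE hw)⟩
  have hRw : R w = R v :=
    eq_of_subset_of_card_le (fun x hx => mem_R.2 ((mem_R.1 hx).trans (mem_R.1 hw)))
      (hmin w (mem_univ _))
  have huw : Reach u w := mem_R.1 (hRw ▸ hu)
  exact (ReachIn.of_reflTransGen_of_closed hclosed hw huw).2

lemma sourceUnion_nonempty {h : ℕ} (hh : 0 < h) (E : Finset (Fin h × Fin h)) :
    (sourceUnion E).Nonempty := by
  have : Nonempty (Fin h) := ⟨⟨0, hh⟩⟩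
  obtain ⟨S, hS⟩ := exists_isSourceComponent E
  obtain ⟨v, hv⟩ := hS.1
  exact ⟨v, by simpa [sourceUnion] using ⟨S, hS, hv⟩⟩

lemma exists_source_out_edge {h : ℕ} {E : Finset (Fin h × Fin h)}
    (hout : ∀ v : Fin h, (∃ S : Finset (Fin h), IsSourceComponent E S ∧ v ∈ S) →
      ∃ w : Fin h, (v, w) ∈ E) {v : Fin h} (hv : v ∈ sourceUnion E) :
    ∃ w : Fin h, (v, w) ∈ E :=
  hout v (by simpa [sourceUnion] using hv)

/-- A maximal pairwise disjoint subfamily of a family of nonempty sets meets every member. -/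
lemma Finset.exists_pairwiseDisjoint_forall_not_disjoint_biUnion {α β : Type*} [DecidableEq β]
    (C : Finset α) (s : α → Finset β) (hs : ∀ c ∈ C, (s c).Nonempty) :
    ∃ F ⊆ C, (F : Set α).PairwiseDisjoint s ∧ ∀ c ∈ C, ¬ Disjoint (s c) (F.biUnion s) := by
  classical
  let 𝒜 := C.powerset.filter fun F : Finset α => (F : Set α).PairwiseDisjoint s
  obtain ⟨F, hF𝒜, hFmax⟩ := exists_maximal (s := 𝒜) ⟨∅, by simp [𝒜]⟩
  obtain ⟨hFC, hFdisj⟩ : F ⊆ C ∧ (F : Set α).PairwiseDisjoint s := by simpa [𝒜] using hF𝒜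
  refine ⟨F, hFC, hFdisj, fun c hc hdisj => ?_⟩
  have hcF : c ∉ F := fun hcF =>
    (hs c hc).ne_empty (disjoint_self_iff_empty _ |>.1
      (hdisj.mono_right (subset_biUnion_of_mem s hcF)))
  have hins : insert c F ∈ 𝒜 := by
    simp only [𝒜, mem_filter, mem_powerset, coe_insert]
    exact ⟨insert_subset hc hFC, hFdisj.insert fun j hj _ =>
      hdisj.mono_right (subset_biUnion_of_mem s hj)⟩
  exact hcF (hFmax hins (subset_insert c F) (mem_insert_self c F))

lemma IsCopy.mono {h N : ℕ} {EH : Finset (Fin h × Fin h)} {EG EG' : Finset (Fin N × Fin N)}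
    {f : Fin h → Fin N} (hf : IsCopy EH EG' f) (hsub : EG' ⊆ EG) : IsCopy EH EG f :=
  ⟨hf.1, fun a b hab => hsub (hf.2 a b hab)⟩

lemma not_isCopy_filter_fst_not_mem {h N : ℕ} {EH : Finset (Fin h × Fin h)}
    {EG : Finset (Fin N × Fin N)} {D : Finset (Fin N)} {f : Fin h → Fin N} {u w : Fin h}
    (huw : (u, w) ∈ EH) (hu : f u ∈ D) : ¬ IsCopy EH (EG.filter fun e => e.1 ∉ D) f :=
  fun hf => (mem_filter.1 (hf.2 u w huw)).2 hu

lemma card_symmDiff_filter_fst_not_mem_le {V : Type*} [DecidableEq V] {d : ℕ}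
    (E : Finset (V × V)) (hdeg : ∀ v, #(E.filter fun e => e.1 = v) ≤ d) (D : Finset V) :
    #(symmDiff E (E.filter fun e => e.1 ∉ D)) ≤ #D * d := by
  rw [symmDiff_of_ge (filter_subset _ E), ← filter_not]
  simp_rw [not_not]
  rw [mul_comm]
  exact card_le_mul_card_image_of_maps_to (fun e he => (mem_filter.1 he).2) d fun v _ =>
    (card_le_card fun e he => by simp_all).trans (hdeg v)

lemma Finset.exists_fin_enum_of_pairwise {α : Type*} (F : Finset α) {r : α → α → Prop}
    (hF : (F : Set α).Pairwise r) :
    ∃ f : Fin #F → α, (∀ i, f i ∈ F) ∧ ∀ i j, i ≠ j → r (f i) (f j) :=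
  ⟨fun i => F.equivFin.symm i, fun i => (F.equivFin.symm i).2, fun i j hij =>
    hF (F.equivFin.symm i).2 (F.equivFin.symm j).2
      fun he => hij (F.equivFin.symm.injective (Subtype.ext he))⟩

theorem stmt0_general (h d N : ℕ) (hh : 0 < h) (hd : 1 ≤ d)
    (ε : ℝ)
    (EH : Finset (Fin h × Fin h))
    -- every vertex of H lying in a source component of H has an outgoing edge in H
    (hout : ∀ v : Fin h, (∃ S : Finset (Fin h), IsSourceComponent EH S ∧ v ∈ S) →
      ∃ w : Fin h, (v, w) ∈ EH)
    (EG : Finset (Fin N × Fin N))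
    -- every vertex of G has out-degree at most d
    (hdeg : ∀ v : Fin N, (EG.filter (fun e => e.1 = v)).card ≤ d)
    -- G is ε-far from H-freeness
    (hfar : ∀ EG' : Finset (Fin N × Fin N),
      (∀ f : Fin h → Fin N, ¬ IsCopy EH EG' f) →
      ε * d * N ≤ ((symmDiff EG EG').card : ℝ)) :
    ∃ (m : ℕ) (f : Fin m → Fin h → Fin N),
      ε * N / h ≤ (m : ℝ) ∧
      (∀ i, IsCopy EH EG (f i)) ∧
      ∀ i j, i ≠ j →
        Disjoint ((sourceUnion EH).image (f i)) ((sourceUnion EH).image (f j)) := by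
  classical
  let src : (Fin h → Fin N) → Finset (Fin N) := fun g => (sourceUnion EH).image g
  obtain ⟨F, hFC, hFdisj, hhit⟩ := exists_pairwiseDisjoint_forall_not_disjoint_biUnion
    (univ.filter (IsCopy EH EG)) src fun g _ => (sourceUnion_nonempty hh EH).image g
  let D := F.biUnion src
  have hfree : ∀ g, ¬ IsCopy EH (EG.filter fun e => e.1 ∉ D) g := fun g hg => by
    have hgG : g ∈ univ.filter (IsCopy EH EG) := by simpa using hg.mono (filter_subset _ _)
    obtain ⟨x, hxg, hxD⟩ := not_disjoint_iff.1 (hhit g hgG)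
    obtain ⟨u, hu, rfl⟩ := mem_image.1 hxg
    obtain ⟨w, huw⟩ := exists_source_out_edge hout hu
    exact not_isCopy_filter_fst_not_mem huw hxD hg
  have hcount : ε * d * N ≤ #F * h * d := by
    have hD : #D ≤ #F * h := card_biUnion_le_card_mul F src h fun g _ =>
      card_image_le.trans (card_le_univ _) |>.trans_eq (Fintype.card_fin h)
    calc ε * d * N ≤ #(symmDiff EG (EG.filter fun e => e.1 ∉ D)) := hfar _ hfree
      _ ≤ (#F * h * d : ℕ) := by
        exact_mod_cast (card_symmDiff_filter_fst_not_mem_le EG hdeg D).trans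
          (Nat.mul_le_mul_right d hD)
      _ = #F * h * d := by push_cast; ring
  obtain ⟨f, hfF, hfdisj⟩ := F.exists_fin_enum_of_pairwise hFdisj
  refine ⟨#F, f, ?_, fun i => (mem_filter.1 (hFC (hfF i))).2, hfdisj⟩
  rw [div_le_iff₀ (by exact_mod_cast hh)]
  exact le_of_mul_le_mul_right (by linarith) (by exact_mod_cast hd : (0 : ℝ) < d)

theorem stmt0 (h d N : ℕ) (hh : 0 < h) (hd : 1 ≤ d) (hN : 0 < N)
    (ε : ℝ) (hε0 : 0 < ε) (hε1 : ε < 1)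
    (EH : Finset (Fin h × Fin h))
    -- every vertex of H lying in a source component of H has an outgoing edge in H
    (hout : ∀ v : Fin h, (∃ S : Finset (Fin h), IsSourceComponent EH S ∧ v ∈ S) →
      ∃ w : Fin h, (v, w) ∈ EH)
    (EG : Finset (Fin N × Fin N))
    -- every vertex of G has out-degree at most d
    (hdeg : ∀ v : Fin N, (EG.filter (fun e => e.1 = v)).card ≤ d)
    -- G is ε-far from H-freeness
    (hfar : ∀ EG' : Finset (Fin N × Fin N),
      (∀ f : Fin h → Fin N, ¬ IsCopy EH EG' f) →
      ε * d * N ≤ ((symmDiff EG EG').card : ℝ)) :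
    ∃ (m : ℕ) (f : Fin m → Fin h → Fin N),
      ε * N / h ≤ (m : ℝ) ∧
      (∀ i, IsCopy EH EG (f i)) ∧
      ∀ i j, i ≠ j →
        Disjoint ((sourceUnion EH).image (f i)) ((sourceUnion EH).image (f j)) :=
  stmt0_general h d N hh hd ε EH hout EG hdeg hfar
end

section
/- Let k ≥ 2, ε ∈ (0,1), and let N ≤ R be positive integers. Suppose s : [N] → [R] is ε-far from k-collision-freeness. Then there exist pairwise disjoint subsets I₁, …, I_m of [N], each of size exactly k, with m ≥ εN/k, such that s is constant on each I_j (i.e., each I_j is a k-collision of s). -/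
open Finset

theorem stmt1 (k N R : ℕ) (hk : 2 ≤ k) (hN : 0 < N) (hR : 0 < R) (hNR : N ≤ R)
    (ε : ℝ) (hε0 : 0 < ε) (hε1 : ε < 1)
    (s : Fin N → Fin R)
    -- s is ε-far from k-collision-freeness
    (hfar : ∀ t : Fin N → Fin R,
      (∀ v : Fin R, (Finset.univ.filter (fun i => t i = v)).card < k) →
      ε * N ≤ ((Finset.univ.filter (fun i => s i ≠ t i)).card : ℝ)) :
    ∃ (m : ℕ) (I : Fin m → Finset (Fin N)),
      ε * N / k ≤ (m : ℝ) ∧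
      (∀ j, (I j).card = k) ∧
      (∀ j₁ j₂, j₁ ≠ j₂ → Disjoint (I j₁) (I j₂)) ∧
      (∀ j, ∀ i₁ ∈ I j, ∀ i₂ ∈ I j, s i₁ = s i₂) := by
  classical
  set Good : Finset (Finset (Fin N)) → Prop := fun P =>
    (∀ A ∈ P, A.card = k ∧ ∀ i₁ ∈ A, ∀ i₂ ∈ A, s i₁ = s i₂) ∧
    (P : Set (Finset (Fin N))).PairwiseDisjoint id with hGoodDef
  have hne : ((univ : Finset (Finset (Finset (Fin N)))).filter Good).Nonempty := by
    refine ⟨∅, ?_⟩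
    simp [hGoodDef, Set.pairwiseDisjoint_empty]
  obtain ⟨P, hPmem, hPmax⟩ := Finset.exists_max_image _ Finset.card hne
  have hP : Good P := (Finset.mem_filter.mp hPmem).2
  set S : Finset (Fin N) := P.biUnion id with hSdef
  have hScard : S.card = P.card * k := by
    rw [hSdef, Finset.card_biUnion]
    · simp only [id]
      rw [Finset.sum_congr rfl (fun A hA => (hP.1 A hA).1), Finset.sum_const, smul_eq_mul]
    · intro A hA B hB hAB
      exact hP.2 (mem_coe.mpr hA) (mem_coe.mpr hB) hAB
  -- maximality: fibers outside S are small
  have hsmall : ∀ v : Fin R, ((Sᶜ).filter (fun i => s i = v)).card < k := by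
    intro v
    by_contra h
    push_neg at h
    obtain ⟨T, hTsub, hTcard⟩ := Finset.exists_subset_card_eq h
    have hTSc : T ⊆ Sᶜ := hTsub.trans (Finset.filter_subset _ _)
    have hTnotP : T ∉ P := by
      intro hTP
      have hTne : T.Nonempty := by rw [← Finset.card_pos, hTcard]; omega
      obtain ⟨i, hi⟩ := hTne
      have : i ∈ S := Finset.mem_biUnion.mpr ⟨T, hTP, hi⟩
      exact (Finset.mem_compl.mp (hTSc hi)) this
    have hGoodins : Good (insert T P) := by
      constructor
      · intro A hA
        rcases Finset.mem_insert.mp hA with rfl | hA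
        · refine ⟨hTcard, ?_⟩
          intro i₁ h₁ i₂ h₂
          have e₁ := (Finset.mem_filter.mp (hTsub h₁)).2
          have e₂ := (Finset.mem_filter.mp (hTsub h₂)).2
          rw [e₁, e₂]
        · exact hP.1 A hA
      · rw [Finset.coe_insert]
        refine hP.2.insert ?_
        intro B hB _
        refine Finset.disjoint_left.mpr ?_
        intro i hiT hiB
        exact (Finset.mem_compl.mp (hTSc hiT)) (Finset.mem_biUnion.mpr ⟨B, hB, hiB⟩)
    have hle := hPmax (insert T P) (Finset.mem_filter.mpr ⟨Finset.mem_univ _, hGoodins⟩)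
    rw [Finset.card_insert_of_notMem hTnotP] at hle
    omega
  -- build repaired function t
  set V : Finset (Fin R) := univ \ (Sᶜ).image s with hVdef
  have hSN : S.card ≤ N := by
    have := Finset.card_le_univ S
    simpa using this
  have hcardV : S.card ≤ V.card := by
    have h1 : V.card = R - ((Sᶜ).image s).card := by
      rw [hVdef, Finset.card_sdiff_of_subset (Finset.subset_univ _)]
      simp
    have h2 : ((Sᶜ).image s).card ≤ N - S.card := by
      calc ((Sᶜ).image s).card ≤ (Sᶜ).card := Finset.card_image_le
        _ = N - S.card := by rw [Finset.card_compl]; simp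
    omega
  have hcardV' : Fintype.card S ≤ Fintype.card V := by
    simpa [Fintype.card_coe] using hcardV
  obtain ⟨f⟩ := Function.Embedding.nonempty_of_card_le hcardV'
  set t : Fin N → Fin R := fun i => if h : i ∈ S then (f ⟨i, h⟩ : Fin R) else s i with htdef
  have hts : ∀ i, i ∉ S → t i = s i := by
    intro i hi; simp [htdef, hi]
  have htfree : ∀ v : Fin R, (univ.filter (fun i => t i = v)).card < k := by
    intro v
    have hsub : univ.filter (fun i => t i = v) ⊆
        (S.filter (fun i => t i = v)) ∪ ((Sᶜ).filter (fun i => s i = v)) := by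
      intro i hi
      have hiv := (Finset.mem_filter.mp hi).2
      by_cases h : i ∈ S
      · exact Finset.mem_union_left _ (Finset.mem_filter.mpr ⟨h, hiv⟩)
      · exact Finset.mem_union_right _ (Finset.mem_filter.mpr ⟨Finset.mem_compl.mpr h,
          by rw [← hts i h]; exact hiv⟩)
    have h1 : (S.filter (fun i => t i = v)).card ≤ 1 := by
      refine Finset.card_le_one.mpr ?_
      intro a ha b hb
      have hma := Finset.mem_filter.mp ha
      have hmb := Finset.mem_filter.mp hb
      have ea : (f ⟨a, hma.1⟩ : Fin R) = v := by
        have := hma.2; simp only [htdef] at this; rwa [dif_pos hma.1] at this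
      have eb : (f ⟨b, hmb.1⟩ : Fin R) = v := by
        have := hmb.2; simp only [htdef] at this; rwa [dif_pos hmb.1] at this
      have : f ⟨a, hma.1⟩ = f ⟨b, hmb.1⟩ := Subtype.ext (ea.trans eb.symm)
      exact congrArg Subtype.val (f.injective this)
    by_cases hS : (S.filter (fun i => t i = v)).Nonempty
    · obtain ⟨i, hi⟩ := hS
      have hmi := Finset.mem_filter.mp hi
      have hvV : v ∈ V := by
        have : t i = v := hmi.2
        simp only [htdef] at this
        rw [dif_pos hmi.1] at this
        rw [← this]
        exact (f ⟨i, hmi.1⟩).2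
      have hempty : (Sᶜ).filter (fun i => s i = v) = ∅ := by
        rw [Finset.filter_eq_empty_iff]
        intro j hj hjv
        have : v ∈ (Sᶜ).image s := Finset.mem_image.mpr ⟨j, hj, hjv⟩
        exact (Finset.mem_sdiff.mp hvV).2 this
      calc (univ.filter (fun i => t i = v)).card
          ≤ (S.filter (fun i => t i = v)).card + ((Sᶜ).filter (fun i => s i = v)).card :=
            (Finset.card_le_card hsub).trans (Finset.card_union_le _ _)
        _ ≤ 1 + 0 := by rw [hempty]; simpa using h1
        _ < k := by omega
    · rw [Finset.not_nonempty_iff_eq_empty] at hS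
      calc (univ.filter (fun i => t i = v)).card
          ≤ (S.filter (fun i => t i = v)).card + ((Sᶜ).filter (fun i => s i = v)).card :=
            (Finset.card_le_card hsub).trans (Finset.card_union_le _ _)
        _ = ((Sᶜ).filter (fun i => s i = v)).card := by rw [hS]; simp
        _ < k := hsmall v
  have hdiff : univ.filter (fun i => s i ≠ t i) ⊆ S := by
    intro i hi
    by_contra h
    exact (Finset.mem_filter.mp hi).2 (hts i h).symm
  have hmain : ε * N ≤ (P.card * k : ℕ) := by
    calc ε * N ≤ ((univ.filter (fun i => s i ≠ t i)).card : ℝ) := hfar t htfree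
      _ ≤ (S.card : ℝ) := by exact_mod_cast Finset.card_le_card hdiff
      _ = ((P.card * k : ℕ) : ℝ) := by rw [hScard]
  refine ⟨P.card, fun j => (P.equivFin.symm j : Finset (Fin N)), ?_, ?_, ?_, ?_⟩
  · rw [div_le_iff₀ (by exact_mod_cast Nat.lt_of_lt_of_le Nat.zero_lt_two hk : (0:ℝ) < k)]
    push_cast at hmain ⊢
    linarith
  · intro j
    exact (hP.1 _ (P.equivFin.symm j).2).1
  · intro j₁ j₂ hne'
    refine hP.2 (mem_coe.mpr (P.equivFin.symm j₁).2) (mem_coe.mpr (P.equivFin.symm j₂).2) ?_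
    intro h
    exact hne' (P.equivFin.symm.injective (Subtype.ext h))
  · intro j
    exact (hP.1 _ (P.equivFin.symm j).2).2
end

section
/- Let k ≥ 2, d ≥ 1, ε ∈ (0,1), and let N ≤ R be positive integers. Let s : [N] → [R] and let G_s be the digraph on the N + R vertices {u₁, …, u_N} ∪ {v₁, …, v_R} whose edge set is exactly {(u_i, v_{s(i)}) : i ∈ [N]} (so every out-degree of G_s is at most 1 ≤ d). If every k-collision-free t : [N] → [R] differs from s in at least εN positions, then every k-star-free digraph on the same vertex set as G_s has edge set differing from that of G_s in at least εN edges; in particular, G_s is (εN/(d(N+R)))-far from k-star-freeness with respect to out-degree bound d. -/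
open Finset

/-- The `k`-star: `k` source vertices, each with a single outgoing edge to a common center. -/
def starEdges (k : ℕ) : Finset (Fin (k + 1) × Fin (k + 1)) :=
  Finset.univ.image (fun j : Fin k => (j.succ, (0 : Fin (k + 1))))

/-- The digraph with edge set `E₂` contains a subgraph isomorphic to the one with edge set `E₁`. -/
def ContainsCopy {V W : Type*} (E₁ : Finset (V × V)) (E₂ : Finset (W × W)) : Prop :=
  ∃ f : V → W, Function.Injective f ∧ ∀ a b : V, (a, b) ∈ E₁ → (f a, f b) ∈ E₂

/-- The digraph `G_s` on `N + R` vertices associated with a sequence `s : [N] → [R]`. -/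
def gsEdges {N R : ℕ} (s : Fin N → Fin R) :
    Finset ((Fin N ⊕ Fin R) × (Fin N ⊕ Fin R)) :=
  Finset.univ.image (fun i : Fin N => (Sum.inl i, Sum.inr (s i)))

/-!
Given a `k`-star-free `E'`, keep the indices `i` whose edge `(uᵢ, v_{s i})` survives in `E'`;
each dropped index costs one edit. No value is taken `k` times by kept indices, since that
would give a `k`-star in `E'`, and as `N ≤ R` the dropped indices can be sent injectively to
values that no kept index takes. The resulting `t` is `k`-collision-free and differs from `s`
only at dropped indices, so `εN ≤ #{i | s i ≠ t i} ≤ |E(G_s) ∆ E'|`.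
-/

theorem exists_fiber_card_lt_of_fiber_card_lt_on {α β : Type*} [Fintype α] [DecidableEq α]
    [Fintype β] [DecidableEq β] {k : ℕ} (hk : 1 < k)
    (hαβ : Fintype.card α ≤ Fintype.card β) (s : α → β) (K : Finset α)
    (hs : ∀ v, #{i ∈ K | s i = v} < k) :
    ∃ t : α → β, (∀ v, #{i | t i = v} < k) ∧ ({i | s i ≠ t i} : Finset α) ⊆ Kᶜ := by
  set U := (K.image s)ᶜ
  have hroom : #Kᶜ ≤ #U := by
    have := card_image_le (s := K) (f := s)
    have := card_le_univ K
    rw [card_compl, card_compl]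
    omega
  obtain ⟨f⟩ : Nonempty (↥Kᶜ ↪ ↥U) :=
    Function.Embedding.nonempty_of_card_le (by simpa only [Fintype.card_coe] using hroom)
  let t : α → β := fun i => if h : i ∈ K then s i else f ⟨i, mem_compl.2 h⟩
  have ht_mem : ∀ i, i ∉ K → t i ∈ U := fun i h => by simp only [t, dif_neg h, (f _).2]
  refine ⟨t, fun v => ?_, fun i hi => mem_compl.2 fun h => ?_⟩
  · by_cases hv : v ∈ U
    -- a value outside `s '' K` is hit only by reassigned indices, and those injectively
    · have hsub : ({i | t i = v} : Finset α) ⊆ Kᶜ := fun i hi => by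
        refine mem_compl.2 fun h => mem_compl.1 hv (mem_image.2 ⟨i, h, ?_⟩)
        simpa [t, h] using hi
      have : #{i | t i = v} ≤ 1 := card_le_one.2 fun a ha b hb => by
        have ha' := mem_compl.1 (hsub ha)
        have hb' := mem_compl.1 (hsub hb)
        simp only [mem_filter, mem_univ, true_and, t, dif_neg ha', dif_neg hb'] at ha hb
        simpa using f.injective (Subtype.ext (ha.trans hb.symm))
      omega
    · refine lt_of_le_of_lt (card_le_card fun i hi => ?_) (hs v)
      have hiK : i ∈ K := by
        by_contra h
        exact hv ((mem_filter.1 hi).2 ▸ ht_mem i h)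
      simpa [t, hiK] using hi
  · simp [t, h] at hi

theorem containsCopy_starEdges {W : Type*} {E : Finset (W × W)} {c : W} {F : Finset W} {k : ℕ}
    (hc : c ∉ F) (hk : k ≤ #F) (hE : ∀ w ∈ F, (w, c) ∈ E) : ContainsCopy (starEdges k) E := by
  obtain ⟨e⟩ : Nonempty (Fin k ↪ F) :=
    Function.Embedding.nonempty_of_card_le (by simpa using hk)
  refine ⟨Fin.cons c fun j => (e j : W), Fin.cons_injective_iff.2 ⟨?_, ?_⟩, ?_⟩
  · rintro ⟨j, hj⟩
    exact hc (hj ▸ (e j).2)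
  · exact Subtype.val_injective.comp e.injective
  · intro a b hab
    obtain ⟨j, -, hj⟩ := mem_image.1 hab
    cases hj
    exact hE _ (e j).2

section StarFreeEditing

variable {k N R : ℕ} {s : Fin N → Fin R} {E' : Finset ((Fin N ⊕ Fin R) × (Fin N ⊕ Fin R))}

theorem card_fiber_lt_of_not_containsCopy_starEdges (hE' : ¬ ContainsCopy (starEdges k) E')
    {K : Finset (Fin N)} (hK : ∀ i ∈ K, (Sum.inl i, Sum.inr (s i)) ∈ E') (v : Fin R) :
    #{i ∈ K | s i = v} < k := by
  by_contra! h
  refine hE' (containsCopy_starEdges (c := Sum.inr v) (F := {i ∈ K | s i = v}.map .inl)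
    (by simp) (by simpa using h) ?_)
  simp only [mem_map, mem_filter, Function.Embedding.inl_apply]
  rintro _ ⟨i, ⟨hi, rfl⟩, rfl⟩
  exact hK i hi

theorem card_compl_le_card_symmDiff_gsEdges {K : Finset (Fin N)}
    (hK : ∀ i, (Sum.inl i, Sum.inr (s i)) ∈ E' → i ∈ K) :
    #Kᶜ ≤ #(symmDiff (gsEdges s) E') := by
  refine card_le_card_of_injOn (fun i => (Sum.inl i, Sum.inr (s i))) (fun i hi => ?_) ?_
  · simp only [coe_compl, Set.mem_compl_iff, mem_coe] at hi
    exact mem_symmDiff.2 (.inl ⟨by simp [gsEdges], fun h => hi (hK i h)⟩)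
  · intro a _ b _ h
    simpa using congrArg Prod.fst h

end StarFreeEditing

theorem stmt3_general (k d N R : ℕ) (hk : 2 ≤ k) (hNR : N ≤ R)
    (ε : ℝ)
    (s : Fin N → Fin R)
    -- every k-collision-free t differs from s in at least εN positions
    (hfar : ∀ t : Fin N → Fin R,
      (∀ v : Fin R, (Finset.univ.filter (fun i => t i = v)).card < k) →
      ε * N ≤ ((Finset.univ.filter (fun i => s i ≠ t i)).card : ℝ)) :
    -- every k-star-free digraph on the same vertex set differs from G_s in at least εN edges
    (∀ E' : Finset ((Fin N ⊕ Fin R) × (Fin N ⊕ Fin R)),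
      ¬ ContainsCopy (starEdges k) E' →
      ε * N ≤ ((symmDiff (gsEdges s) E').card : ℝ)) ∧
    -- in particular, G_s is (εN/(d(N+R)))-far from k-star-freeness w.r.t. out-degree bound d
    (∀ E' : Finset ((Fin N ⊕ Fin R) × (Fin N ⊕ Fin R)),
      ¬ ContainsCopy (starEdges k) E' →
      ε * N / (d * (N + R)) * d * (N + R) ≤ ((symmDiff (gsEdges s) E').card : ℝ)) := by
  have hedit : ∀ E' : Finset ((Fin N ⊕ Fin R) × (Fin N ⊕ Fin R)),
      ¬ ContainsCopy (starEdges k) E' → ε * N ≤ ((symmDiff (gsEdges s) E').card : ℝ) := by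
    intro E' hE'
    set K : Finset (Fin N) := {i | (Sum.inl i, Sum.inr (s i)) ∈ E'}
    obtain ⟨t, ht, hst⟩ := exists_fiber_card_lt_of_fiber_card_lt_on (by omega)
      (by simpa using hNR) s K
      (card_fiber_lt_of_not_containsCopy_starEdges hE' fun i hi => (mem_filter.1 hi).2)
    calc ε * N ≤ #{i | s i ≠ t i} := hfar t ht
      _ ≤ #Kᶜ := by exact_mod_cast card_le_card hst
      _ ≤ #(symmDiff (gsEdges s) E') := by
        exact_mod_cast card_compl_le_card_symmDiff_gsEdges fun i hi => by simpa [K] using hi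
  refine ⟨hedit, fun E' hE' => ?_⟩
  rw [mul_assoc _ (d : ℝ)]
  rcases eq_or_ne ((d : ℝ) * (N + R)) 0 with h | h
  · simp [h]
  · rw [div_mul_cancel₀ _ h]
    exact hedit E' hE'

theorem stmt3 (k d N R : ℕ) (hk : 2 ≤ k) (hd : 1 ≤ d) (hN : 0 < N) (hNR : N ≤ R)
    (ε : ℝ) (hε0 : 0 < ε) (hε1 : ε < 1)
    (s : Fin N → Fin R)
    -- every k-collision-free t differs from s in at least εN positions
    (hfar : ∀ t : Fin N → Fin R,
      (∀ v : Fin R, (Finset.univ.filter (fun i => t i = v)).card < k) →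
      ε * N ≤ ((Finset.univ.filter (fun i => s i ≠ t i)).card : ℝ)) :
    -- every k-star-free digraph on the same vertex set differs from G_s in at least εN edges
    (∀ E' : Finset ((Fin N ⊕ Fin R) × (Fin N ⊕ Fin R)),
      ¬ ContainsCopy (starEdges k) E' →
      ε * N ≤ ((symmDiff (gsEdges s) E').card : ℝ)) ∧
    -- in particular, G_s is (εN/(d(N+R)))-far from k-star-freeness w.r.t. out-degree bound d
    (∀ E' : Finset ((Fin N ⊕ Fin R) × (Fin N ⊕ Fin R)),
      ¬ ContainsCopy (starEdges k) E' →
      ε * N / (d * (N + R)) * d * (N + R) ≤ ((symmDiff (gsEdges s) E').card : ℝ)) :=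
  stmt3_general k d N R hk hNR ε s hfar
end

section
/- Let k ≥ 3, c > 2, γ ∈ (0,1), and let N, R be positive integers with N/c ≤ R ≤ N/2. Let s : [N] → {0, 1, …, R} and define t : [N] → [R + ⌈N/2⌉] by t(i) = s(i) if s(i) > 0 and t(i) = R + ⌈i/2⌉ if s(i) = 0. Then: (a) some nonzero value occurs at least k times in s if and only if some value occurs at least k times in t; and (b) if the number of distinct nonzero values that occur at least k times in s is greater than γR, then the number of distinct values that occur at least k times in t is greater than (γ/c)N. -/
/-
Padding the zeros of `s` with the values `R + ⌈i/2⌉` leaves the occurrence count of every value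
in `[1, R]` unchanged, while each padding value is hit by at most two indices. Since `k ≥ 3`, the
values occurring at least `k` times in `t` are exactly the nonzero values occurring at least `k`
times in `s`; part (b) then follows from `N / c ≤ R`.
-/

open Finset

/-- Number of occurrences of the value `v` in the sequence `f`. -/
def occ {N : ℕ} (f : Fin N → ℕ) (v : ℕ) : ℕ :=
  (Finset.univ.filter (fun i => f i = v)).card

theorem occ_le_occ_of_imp {N : ℕ} {f g : Fin N → ℕ} {v w : ℕ} (h : ∀ i, f i = v → g i = w) :
    occ f v ≤ occ g w :=
  card_le_card fun i hi => by simp_all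

theorem occ_eq_zero_of_lt {N R v : ℕ} {f : Fin N → ℕ} (hf : ∀ i, f i ≤ R) (hv : R < v) :
    occ f v = 0 := by
  rw [occ, card_eq_zero, filter_eq_empty_iff]
  exact fun i _ => (lt_of_le_of_lt (hf i) hv).ne

theorem occ_add_half_le_two (N R v : ℕ) : occ (fun i : Fin N => R + (i.val + 2) / 2) v ≤ 2 := by
  calc occ (fun i : Fin N => R + (i.val + 2) / 2) v
      ≤ ({2 * (v - R) - 2, 2 * (v - R) - 1} : Finset ℕ).card := by
        refine card_le_card_of_injOn Fin.val (fun i hi => ?_) Fin.val_injective.injOn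
        simp only [coe_filter, mem_univ, true_and, Set.mem_ofPred_eq] at hi
        simp only [coe_insert, coe_singleton, Set.mem_insert_iff, Set.mem_singleton_iff]
        omega
    _ ≤ 2 := card_le_two

section Padding

variable {N R : ℕ} {s t : Fin N → ℕ}

theorem occ_padding_eq (ht : ∀ i : Fin N, t i = if 0 < s i then s i else R + (i.val + 2) / 2)
    {v : ℕ} (hv0 : 0 < v) (hvR : v ≤ R) : occ t v = occ s v := by
  refine congrArg card (filter_congr fun i _ => ?_)
  rw [ht i]
  split_ifs <;> omega

theorem occ_padding_le_two (hs : ∀ i, s i ≤ R)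
    (ht : ∀ i : Fin N, t i = if 0 < s i then s i else R + (i.val + 2) / 2)
    {v : ℕ} (hv : R < v) : occ t v ≤ 2 := by
  refine (occ_le_occ_of_imp fun i hi => ?_).trans (occ_add_half_le_two N R v)
  have := hs i
  rw [ht i] at hi
  split_ifs at hi <;> omega

theorem occ_padding_zero (ht : ∀ i : Fin N, t i = if 0 < s i then s i else R + (i.val + 2) / 2) :
    occ t 0 = 0 := by
  rw [occ, card_eq_zero, filter_eq_empty_iff]
  intro i _
  rw [ht i]
  split_ifs <;> omega

theorem le_occ_padding_iff (hs : ∀ i, s i ≤ R)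
    (ht : ∀ i : Fin N, t i = if 0 < s i then s i else R + (i.val + 2) / 2)
    {k : ℕ} (hk : 3 ≤ k) (v : ℕ) : k ≤ occ t v ↔ v ∈ Icc 1 R ∧ k ≤ occ s v := by
  rw [mem_Icc]
  constructor
  · intro hkv
    have hv0 : 0 < v := Nat.pos_of_ne_zero fun h => by
      rw [h, occ_padding_zero ht] at hkv; omega
    have hvR : v ≤ R := not_lt.mp fun h => by
      have := occ_padding_le_two hs ht h; omega
    exact ⟨⟨hv0, hvR⟩, occ_padding_eq ht hv0 hvR ▸ hkv⟩
  · rintro ⟨⟨hv0, hvR⟩, hkv⟩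
    rwa [occ_padding_eq ht hv0 hvR]

end Padding

theorem stmt4_general (k N R : ℕ) (hk : 3 ≤ k)
    (c γ : ℝ) (hγ0 : 0 < γ)
    (hNc : (N : ℝ) / c ≤ R)
    (s : Fin N → ℕ) (hs : ∀ i, s i ≤ R)
    (t : Fin N → ℕ)
    -- t(i) = s(i) if s(i) > 0, and t(i) = R + ⌈i/2⌉ (with 1-based index i) otherwise;
    -- for the 0-based index i, the 1-based index is i+1 and ⌈(i+1)/2⌉ = (i+2)/2 in ℕ
    (ht : ∀ i : Fin N, t i = if 0 < s i then s i else R + (i.val + 2) / 2) :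
    -- (a) some nonzero value occurs ≥ k times in s  iff  some value occurs ≥ k times in t
    ((∃ v : ℕ, 0 < v ∧ k ≤ occ s v) ↔ (∃ v : ℕ, k ≤ occ t v)) ∧
    -- (b) many distinct nonzero k-collisions in s give many distinct k-collisions in t
    (γ * R < (((Finset.Icc 1 R).filter (fun v => k ≤ occ s v)).card : ℝ) →
      γ / c * N <
        (((Finset.Icc 1 (R + (N + 1) / 2)).filter (fun v => k ≤ occ t v)).card : ℝ)) := by
  have hcoll := le_occ_padding_iff hs ht hk
  refine ⟨⟨fun ⟨v, hv0, hkv⟩ => ⟨v, ?_⟩, fun ⟨v, hkv⟩ => ?_⟩, fun hcard => ?_⟩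
  · have hvR : v ≤ R := not_lt.mp fun h => by rw [occ_eq_zero_of_lt hs h] at hkv; omega
    exact (hcoll v).mpr ⟨mem_Icc.mpr ⟨hv0, hvR⟩, hkv⟩
  · obtain ⟨hv, hkv⟩ := (hcoll v).mp hkv
    exact ⟨v, (mem_Icc.mp hv).1, hkv⟩
  · have hsub : (Icc 1 R).filter (fun v => k ≤ occ s v) ⊆
        (Icc 1 (R + (N + 1) / 2)).filter (fun v => k ≤ occ t v) := fun v hv => by
      obtain ⟨hv, hkv⟩ := mem_filter.mp hv
      exact mem_filter.mpr ⟨Icc_subset_Icc_right (Nat.le_add_right _ _) hv, (hcoll v).mpr ⟨hv, hkv⟩⟩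
    calc γ / c * N = γ * (N / c) := by ring
      _ ≤ γ * R := mul_le_mul_of_nonneg_left hNc hγ0.le
      _ < _ := hcard
      _ ≤ _ := by exact_mod_cast card_le_card hsub

theorem stmt4 (k N R : ℕ) (hk : 3 ≤ k) (hN : 0 < N) (hR : 0 < R)
    (c γ : ℝ) (hc : 2 < c) (hγ0 : 0 < γ) (hγ1 : γ < 1)
    (hNc : (N : ℝ) / c ≤ R) (hRN : (R : ℝ) ≤ N / 2)
    (s : Fin N → ℕ) (hs : ∀ i, s i ≤ R)
    (t : Fin N → ℕ)
    -- t(i) = s(i) if s(i) > 0, and t(i) = R + ⌈i/2⌉ (with 1-based index i) otherwise;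
    -- for the 0-based index i, the 1-based index is i+1 and ⌈(i+1)/2⌉ = (i+2)/2 in ℕ
    (ht : ∀ i : Fin N, t i = if 0 < s i then s i else R + (i.val + 2) / 2) :
    -- (a) some nonzero value occurs ≥ k times in s  iff  some value occurs ≥ k times in t
    ((∃ v : ℕ, 0 < v ∧ k ≤ occ s v) ↔ (∃ v : ℕ, k ≤ occ t v)) ∧
    -- (b) many distinct nonzero k-collisions in s give many distinct k-collisions in t
    (γ * R < (((Finset.Icc 1 R).filter (fun v => k ≤ occ s v)).card : ℝ) →
      γ / c * N <
        (((Finset.Icc 1 (R + (N + 1) / 2)).filter (fun v => k ≤ occ t v)).card : ℝ)) :=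
  stmt4_general k N R hk c γ hγ0 hNc s hs t ht
end

section
/- Let g : {−1,1}^R → {−1,1}, h : {−1,1}^N → {−1,1}, let φ : {−1,1}^R → ℝ be arbitrary, and let ψ : {−1,1}^N → ℝ satisfy ‖ψ‖₁ = 1 and Σ_x ψ(x) = 0. Set D₊ = {x ∈ {−1,1}^N : ψ(x) > 0 and h(x) = −1} and D₋ = {x ∈ {−1,1}^N : ψ(x) < 0 and h(x) = 1}, and write D_{+1} = D₊ and D_{−1} = D₋. For each z ∈ {−1,1}^R let μ^z = μ^{z₁} ⊗ ⋯ ⊗ μ^{z_R} be the product distribution on {−1,1}^R where μ^{b}(−1) = 2·Σ_{x ∈ D_b} |ψ(x)| and μ^{b}(1) = 1 − μ^{b}(−1). Then Σ_{x ∈ {−1,1}^{NR}} (φ★ψ)(x) · g(h(x₁), …, h(x_R)) = Σ_{z ∈ {−1,1}^R} φ(z) · E_{y ∼ μ^z}[g(y₁z₁, …, y_Rz_R)]. -/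
open Finset
open scoped Classical

/-- `toSign b` is the real ±1-value encoded by the Boolean `b`, with `true ↦ −1`. -/
noncomputable def toSign (b : Bool) : ℝ := if b then -1 else 1

/-- The dual block composition `(φ★ψ)(x) = 2^R · φ(sgn(ψ(x₁)),…,sgn(ψ(x_R))) · ∏ᵢ |ψ(xᵢ)|`,
where the Boolean `true` encodes the sign value −1 (i.e. ψ(xᵢ) < 0). -/
noncomputable def dbc {N R : ℕ} (φ : (Fin R → Bool) → ℝ) (ψ : (Fin N → Bool) → ℝ)
    (x : Fin R → Fin N → Bool) : ℝ :=
  2 ^ R * φ (fun i => decide (ψ (x i) < 0)) * ∏ i, |ψ (x i)|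

theorem stmt8 (N R : ℕ)
    (g : (Fin R → Bool) → Bool) (h : (Fin N → Bool) → Bool)
    (φ : (Fin R → Bool) → ℝ) (ψ : (Fin N → Bool) → ℝ)
    (h1 : ∑ x : Fin N → Bool, |ψ x| = 1)
    (h0 : ∑ x : Fin N → Bool, ψ x = 0)
    -- μ^b(−1) = 2·Σ_{x ∈ D_b} |ψ(x)|, μ^b(1) = 1 − μ^b(−1); the Boolean `b = false`
    -- encodes the sign +1 (so D_false = D₊ = {ψ > 0, h = −1}) and `b = true` encodes
    -- the sign −1 (so D_true = D₋ = {ψ < 0, h = 1}); `true` in the second argument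
    -- encodes the outcome −1
    (mu : Bool → Bool → ℝ)
    (hmu1 : ∀ b : Bool, mu b true =
      2 * ∑ x ∈ Finset.univ.filter (fun x : Fin N → Bool =>
          if b then ψ x < 0 ∧ h x = false else 0 < ψ x ∧ h x = true), |ψ x|)
    (hmu2 : ∀ b : Bool, mu b false = 1 - mu b true) :
    ∑ x : Fin R → Fin N → Bool, dbc φ ψ x * toSign (g (fun i => h (x i))) =
      ∑ z : Fin R → Bool, φ z *
        ∑ y : Fin R → Bool,
          (∏ i, mu (z i) (y i)) * toSign (g (fun i => xor (y i) (z i))) := by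
  classical
  set w : Bool → (Fin N → Bool) → ℝ :=
    fun b a => if decide (ψ a < 0) = b then 2 * |ψ a| else 0 with hw
  set v : Bool → Bool → (Fin N → Bool) → ℝ :=
    fun b y a => if xor (h a) b = y then w b a else 0 with hv
  -- the two halves of the mass
  have e1 : ∑ x ∈ Finset.univ.filter (fun x : Fin N → Bool => ψ x < 0), |ψ x|
      = - ∑ x ∈ Finset.univ.filter (fun x : Fin N → Bool => ψ x < 0), ψ x := by
    rw [← Finset.sum_neg_distrib]
    exact Finset.sum_congr rfl fun x hx => by
      have := (Finset.mem_filter.mp hx).2; rw [abs_of_neg this]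
  have e2 : ∑ x ∈ Finset.univ.filter (fun x : Fin N → Bool => ¬ ψ x < 0), |ψ x|
      = ∑ x ∈ Finset.univ.filter (fun x : Fin N → Bool => ¬ ψ x < 0), ψ x :=
    Finset.sum_congr rfl fun x hx => by
      have := (Finset.mem_filter.mp hx).2; rw [abs_of_nonneg (not_lt.mp this)]
  have hsum1 : ∑ x ∈ Finset.univ.filter (fun x : Fin N → Bool => ψ x < 0), |ψ x|
      + ∑ x ∈ Finset.univ.filter (fun x : Fin N → Bool => ¬ ψ x < 0), |ψ x| = 1 := by
    rw [Finset.sum_filter_add_sum_filter_not]; exact h1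
  have hsum0 : ∑ x ∈ Finset.univ.filter (fun x : Fin N → Bool => ψ x < 0), ψ x
      + ∑ x ∈ Finset.univ.filter (fun x : Fin N → Bool => ¬ ψ x < 0), ψ x = 0 := by
    rw [Finset.sum_filter_add_sum_filter_not]; exact h0
  have hneg : ∑ x ∈ Finset.univ.filter (fun x : Fin N → Bool => ψ x < 0), |ψ x| = 1/2 := by
    linarith
  have hpos : ∑ x ∈ Finset.univ.filter (fun x : Fin N → Bool => ¬ ψ x < 0), |ψ x| = 1/2 := by
    linarith
  -- replacing 0 ≤ ψ by 0 < ψ under |ψ|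
  have habsT : ∑ x ∈ Finset.univ.filter (fun x : Fin N → Bool => h x = true ∧ ¬ ψ x < 0), |ψ x|
      = ∑ x ∈ Finset.univ.filter (fun x : Fin N → Bool => h x = true ∧ 0 < ψ x), |ψ x| := by
    refine (Finset.sum_subset ?_ ?_).symm
    · intro x hx
      rcases Finset.mem_filter.mp hx with ⟨_, hP, hlt⟩
      exact Finset.mem_filter.mpr ⟨Finset.mem_univ _, hP, not_lt.mpr hlt.le⟩
    · intro x hx hnx
      rcases Finset.mem_filter.mp hx with ⟨_, hP, hlt⟩
      have hz : ψ x = 0 := by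
        by_contra hne
        exact hnx (Finset.mem_filter.mpr ⟨Finset.mem_univ _, hP,
          lt_of_le_of_ne (not_lt.mp hlt) (Ne.symm hne)⟩)
      simp [hz]
  -- splitting each half by the value of h
  have hsplitpos : (∑ x ∈ Finset.univ.filter (fun x : Fin N → Bool => h x = true ∧ ¬ ψ x < 0), |ψ x|)
      + (∑ x ∈ Finset.univ.filter (fun x : Fin N → Bool => h x = false ∧ ¬ ψ x < 0), |ψ x|) = 1/2 := by
    rw [← hpos, ← Finset.sum_filter_add_sum_filter_not
      (Finset.univ.filter (fun x : Fin N → Bool => ¬ ψ x < 0)) (fun x => h x = true) (fun x => |ψ x|)]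
    congr 1
    · exact Finset.sum_congr (by ext a; simp; tauto) fun _ _ => rfl
    · exact Finset.sum_congr (by ext a; simp; tauto) fun _ _ => rfl
  have hsplitneg : (∑ x ∈ Finset.univ.filter (fun x : Fin N → Bool => h x = false ∧ ψ x < 0), |ψ x|)
      + (∑ x ∈ Finset.univ.filter (fun x : Fin N → Bool => h x = true ∧ ψ x < 0), |ψ x|) = 1/2 := by
    rw [← hneg, ← Finset.sum_filter_add_sum_filter_not
      (Finset.univ.filter (fun x : Fin N → Bool => ψ x < 0)) (fun x => h x = false) (fun x => |ψ x|)]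
    congr 1
    · exact Finset.sum_congr (by ext a; simp; tauto) fun _ _ => rfl
    · exact Finset.sum_congr (by ext a; simp; tauto) fun _ _ => rfl
  -- the key per-coordinate identity
  have hvs : ∀ b y, (∑ a : Fin N → Bool, v b y a)
      = 2 * ∑ a ∈ Finset.univ.filter (fun a => xor (h a) b = y ∧ decide (ψ a < 0) = b), |ψ a| := by
    intro b y
    rw [Finset.mul_sum, Finset.sum_filter]
    refine Finset.sum_congr rfl fun a _ => ?_
    simp only [hv, hw, ite_and]
  have key : ∀ b y : Bool, (∑ a : Fin N → Bool, v b y a) = mu b y := by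
    intro b y
    rw [hvs]
    cases b <;> cases y
    · -- b = false, y = false
      rw [hmu2 false, hmu1 false]
      have g1 : ∑ a ∈ Finset.univ.filter (fun a : Fin N → Bool =>
            xor (h a) false = false ∧ decide (ψ a < 0) = false), |ψ a|
          = ∑ x ∈ Finset.univ.filter (fun x : Fin N → Bool => h x = false ∧ ¬ ψ x < 0), |ψ x| :=
        Finset.sum_congr (by ext a; simp) fun _ _ => rfl
      have g2 : ∑ x ∈ Finset.univ.filter (fun x : Fin N → Bool =>
            if (false : Bool) then ψ x < 0 ∧ h x = false else 0 < ψ x ∧ h x = true), |ψ x|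
          = ∑ x ∈ Finset.univ.filter (fun x : Fin N → Bool => h x = true ∧ 0 < ψ x), |ψ x| :=
        Finset.sum_congr (by ext a; simp [and_comm]) fun _ _ => rfl
      linarith [g1, g2, habsT, hsplitpos]
    · -- b = false, y = true
      rw [hmu1 false]
      have g1 : ∑ a ∈ Finset.univ.filter (fun a : Fin N → Bool =>
            xor (h a) false = true ∧ decide (ψ a < 0) = false), |ψ a|
          = ∑ x ∈ Finset.univ.filter (fun x : Fin N → Bool => h x = true ∧ ¬ ψ x < 0), |ψ x| :=
        Finset.sum_congr (by ext a; simp) fun _ _ => rfl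
      have g2 : ∑ x ∈ Finset.univ.filter (fun x : Fin N → Bool =>
            if (false : Bool) then ψ x < 0 ∧ h x = false else 0 < ψ x ∧ h x = true), |ψ x|
          = ∑ x ∈ Finset.univ.filter (fun x : Fin N → Bool => h x = true ∧ 0 < ψ x), |ψ x| :=
        Finset.sum_congr (by ext a; simp [and_comm]) fun _ _ => rfl
      linarith [g1, g2, habsT]
    · -- b = true, y = false
      rw [hmu2 true, hmu1 true]
      have g1 : ∑ a ∈ Finset.univ.filter (fun a : Fin N → Bool =>
            xor (h a) true = false ∧ decide (ψ a < 0) = true), |ψ a|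
          = ∑ x ∈ Finset.univ.filter (fun x : Fin N → Bool => h x = true ∧ ψ x < 0), |ψ x| :=
        Finset.sum_congr (by ext a; simp) fun _ _ => rfl
      have g2 : ∑ x ∈ Finset.univ.filter (fun x : Fin N → Bool =>
            if (true : Bool) then ψ x < 0 ∧ h x = false else 0 < ψ x ∧ h x = true), |ψ x|
          = ∑ x ∈ Finset.univ.filter (fun x : Fin N → Bool => h x = false ∧ ψ x < 0), |ψ x| :=
        Finset.sum_congr (by ext a; simp [and_comm]) fun _ _ => rfl
      linarith [g1, g2, hsplitneg]
    · -- b = true, y = true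
      rw [hmu1 true]
      have g1 : ∑ a ∈ Finset.univ.filter (fun a : Fin N → Bool =>
            xor (h a) true = true ∧ decide (ψ a < 0) = true), |ψ a|
          = ∑ x ∈ Finset.univ.filter (fun x : Fin N → Bool => h x = false ∧ ψ x < 0), |ψ x| :=
        Finset.sum_congr (by ext a; simp) fun _ _ => rfl
      have g2 : ∑ x ∈ Finset.univ.filter (fun x : Fin N → Bool =>
            if (true : Bool) then ψ x < 0 ∧ h x = false else 0 < ψ x ∧ h x = true), |ψ x|
          = ∑ x ∈ Finset.univ.filter (fun x : Fin N → Bool => h x = false ∧ ψ x < 0), |ψ x| :=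
        Finset.sum_congr (by ext a; simp [and_comm]) fun _ _ => rfl
      linarith [g1, g2]
  -- Fubini for product-form summands over the pi type
  have hfub : ∀ f : Fin R → (Fin N → Bool) → ℝ,
      (∑ x : Fin R → Fin N → Bool, ∏ i, f i (x i)) = ∏ i, ∑ a : Fin N → Bool, f i a :=
    fun f => (Fintype.prod_sum f).symm
  -- Step 2: the inner sum factorizes
  have step2 : ∀ z : Fin R → Bool,
      (∑ x : Fin R → Fin N → Bool, (∏ i, w (z i) (x i)) * toSign (g fun i => h (x i)))
        = ∑ y : Fin R → Bool, (∏ i, mu (z i) (y i)) * toSign (g fun i => xor (y i) (z i)) := by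
    intro z
    have hx2 : ∀ x : Fin R → Fin N → Bool,
        (∏ i, w (z i) (x i)) * toSign (g fun i => h (x i))
          = ∑ y : Fin R → Bool, (∏ i, v (z i) (y i) (x i)) * toSign (g fun i => xor (y i) (z i)) := by
      intro x
      have hpv : ∀ y : Fin R → Bool, (∏ i, v (z i) (y i) (x i)) =
          if y = (fun i => xor (h (x i)) (z i)) then ∏ i, w (z i) (x i) else 0 := by
        intro y
        by_cases hy : y = fun i => xor (h (x i)) (z i)
        · rw [if_pos hy]; subst hy
          exact Finset.prod_congr rfl fun i _ => by simp [hv]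
        · rw [if_neg hy]
          obtain ⟨i, hi⟩ : ∃ i, y i ≠ xor (h (x i)) (z i) := by
            by_contra hc; push_neg at hc; exact hy (funext hc)
          exact Finset.prod_eq_zero (Finset.mem_univ i) (by simp [hv, Ne.symm hi])
      symm
      calc ∑ y : Fin R → Bool, (∏ i, v (z i) (y i) (x i)) * toSign (g fun i => xor (y i) (z i))
          = ∑ y : Fin R → Bool, (if y = (fun i => xor (h (x i)) (z i)) then
              (∏ i, w (z i) (x i)) * toSign (g fun i => xor (y i) (z i)) else 0) := by
            refine Finset.sum_congr rfl fun y _ => ?_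
            rw [hpv y]; split_ifs <;> simp
        _ = (∏ i, w (z i) (x i)) *
              toSign (g fun i => xor (xor (h (x i)) (z i)) (z i)) := by
            rw [Finset.sum_ite_eq' Finset.univ _ _]
            simp
        _ = (∏ i, w (z i) (x i)) * toSign (g fun i => h (x i)) := by
            simp [Bool.xor_assoc]
    calc ∑ x : Fin R → Fin N → Bool, (∏ i, w (z i) (x i)) * toSign (g fun i => h (x i))
        = ∑ x : Fin R → Fin N → Bool, ∑ y : Fin R → Bool,
            (∏ i, v (z i) (y i) (x i)) * toSign (g fun i => xor (y i) (z i)) :=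
          Finset.sum_congr rfl fun x _ => hx2 x
      _ = ∑ y : Fin R → Bool, ∑ x : Fin R → Fin N → Bool,
            (∏ i, v (z i) (y i) (x i)) * toSign (g fun i => xor (y i) (z i)) :=
          Finset.sum_comm
      _ = ∑ y : Fin R → Bool, (∑ x : Fin R → Fin N → Bool, ∏ i, v (z i) (y i) (x i))
            * toSign (g fun i => xor (y i) (z i)) := by
          refine Finset.sum_congr rfl fun y _ => ?_
          rw [Finset.sum_mul]
      _ = ∑ y : Fin R → Bool, (∏ i, mu (z i) (y i)) * toSign (g fun i => xor (y i) (z i)) := by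
          refine Finset.sum_congr rfl fun y _ => ?_
          rw [hfub (fun i a => v (z i) (y i) a)]
          congr 1
          exact Finset.prod_congr rfl fun i _ => key (z i) (y i)
  -- Step 1: grouping by the sign pattern
  have hx1 : ∀ x : Fin R → Fin N → Bool,
      (∑ z : Fin R → Bool, φ z * ((∏ i, w (z i) (x i)) * toSign (g fun i => h (x i))))
        = dbc φ ψ x * toSign (g fun i => h (x i)) := by
    intro x
    have hprod : ∀ z : Fin R → Bool, (∏ i, w (z i) (x i)) =
        if z = (fun i => decide (ψ (x i) < 0)) then (2:ℝ) ^ R * ∏ i, |ψ (x i)| else 0 := by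
      intro z
      by_cases hz : z = fun i => decide (ψ (x i) < 0)
      · rw [if_pos hz]; subst hz
        rw [Finset.prod_congr rfl (fun i _ => show w (decide (ψ (x i) < 0)) (x i) = 2 * |ψ (x i)| by
          simp [hw]), Finset.prod_mul_distrib, Finset.prod_const, Finset.card_univ,
          Fintype.card_fin]
      · rw [if_neg hz]
        obtain ⟨i, hi⟩ : ∃ i, z i ≠ decide (ψ (x i) < 0) := by
          by_contra hc; push_neg at hc; exact hz (funext hc)
        exact Finset.prod_eq_zero (Finset.mem_univ i) (by simp [hw, Ne.symm hi])
    calc ∑ z : Fin R → Bool, φ z * ((∏ i, w (z i) (x i)) * toSign (g fun i => h (x i)))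
        = ∑ z : Fin R → Bool, (if z = (fun i => decide (ψ (x i) < 0)) then
            φ z * (((2:ℝ) ^ R * ∏ i, |ψ (x i)|) * toSign (g fun i => h (x i))) else 0) := by
          refine Finset.sum_congr rfl fun z _ => ?_
          rw [hprod z]; split_ifs <;> simp
      _ = dbc φ ψ x * toSign (g fun i => h (x i)) := by
          rw [Finset.sum_ite_eq' Finset.univ _ _]
          simp [dbc]; ring
  calc ∑ x : Fin R → Fin N → Bool, dbc φ ψ x * toSign (g fun i => h (x i))
      = ∑ x : Fin R → Fin N → Bool, ∑ z : Fin R → Bool,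
          φ z * ((∏ i, w (z i) (x i)) * toSign (g fun i => h (x i))) :=
        Finset.sum_congr rfl fun x _ => (hx1 x).symm
    _ = ∑ z : Fin R → Bool, ∑ x : Fin R → Fin N → Bool,
          φ z * ((∏ i, w (z i) (x i)) * toSign (g fun i => h (x i))) := Finset.sum_comm
    _ = ∑ z : Fin R → Bool, φ z * ∑ x : Fin R → Fin N → Bool,
          (∏ i, w (z i) (x i)) * toSign (g fun i => h (x i)) := by
        refine Finset.sum_congr rfl fun z _ => ?_
        rw [Finset.mul_sum]
    _ = ∑ z : Fin R → Bool, φ z *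
          ∑ y : Fin R → Bool, (∏ i, mu (z i) (y i)) * toSign (g fun i => xor (y i) (z i)) := by
        refine Finset.sum_congr rfl fun z _ => ?_
        rw [step2 z]
end
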